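/- Let H be a graph and c, d positive integers such that χ(K_c^H) ≥ c + 1. Then every proper colouring φ of the exponential graph K_{cd}^H with x colours induces a graph homomorphism ψ from the Kneser graph K(cd, c) to the Kneser graph K(x, c+1), where for each c-subset A of {1,…,cd}, ψ(A) is a set of exactly c+1 colours used by φ on the subgraph of K_{cd}^H induced by the functions with image contained in A. -/

import Mathlib

open SimpleGraph

/-- The categorical (tensor) product of two simple graphs. -/
def tensorProd {V W : Type*} (G : SimpleGraph V) (H : SimpleGraph W) :
    SimpleGraph (V × W) where
  Adj a b := G.Adj a.1 b.1 ∧ H.Adj a.2 b.2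
  symm := ⟨fun a b h => ⟨h.1.symm, h.2.symm⟩⟩
  loopless := ⟨fun a h => G.ne_of_adj h.1 rfl⟩

/-- The exponential graph `K_c^H`: vertices are functions `V(H) → Fin c`,
two distinct functions `f, g` are adjacent iff `f u ≠ g v` for every edge `uv` of `H`. -/
def expGraph {V : Type*} (H : SimpleGraph V) (c : ℕ) : SimpleGraph (V → Fin c) where
  Adj f g := f ≠ g ∧ ∀ u v, H.Adj u v → f u ≠ g v
  symm := ⟨fun f g h => ⟨h.1.symm, fun u v huv => (h.2 v u huv.symm).symm⟩⟩
  loopless := ⟨fun f h => h.1 rfl⟩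

/-- The Kneser graph `K(m, n)`: vertices are the `n`-element subsets of an `m`-element set,
two distinct such subsets being adjacent iff they are disjoint. -/
def kneser (m n : ℕ) : SimpleGraph {A : Finset (Fin m) // A.card = n} where
  Adj A B := A ≠ B ∧ Disjoint A.1 B.1
  symm := ⟨fun A B h => ⟨h.1.symm, h.2.symm⟩⟩
  loopless := ⟨fun A h => h.1 rfl⟩

/-- The `n`-th multichromatic number of a graph: the least `m` such that the graph
admits a homomorphism to the Kneser graph `K(m, n)`. -/
noncomputable def multichromatic {V : Type*} (H : SimpleGraph V) (n : ℕ) : ℕ :=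
  sInf {m : ℕ | Nonempty (H →g kneser m n)}

/-- The Poljak–Rödl function `f(n) = min {χ(G × H) : χ(G) ≥ n, χ(H) ≥ n}`. -/
noncomputable def poljakRodl (n : ℕ) : ℕ :=
  sInf {k : ℕ | ∃ (p q : ℕ) (G : SimpleGraph (Fin p)) (H : SimpleGraph (Fin q)),
    (n : ℕ∞) ≤ G.chromaticNumber ∧ (n : ℕ∞) ≤ H.chromaticNumber ∧
    (tensorProd G H).chromaticNumber = (k : ℕ∞)}

/-- The lexicographic product `G[H]`. -/
def lexProd {V W : Type*} (G : SimpleGraph V) (H : SimpleGraph W) :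
    SimpleGraph (V × W) where
  Adj a b := G.Adj a.1 b.1 ∨ (a.1 = b.1 ∧ H.Adj a.2 b.2)
  symm := ⟨fun a b h => by
    rcases h with h | ⟨h1, h2⟩
    · exact Or.inl h.symm
    · exact Or.inr ⟨h1.symm, h2.symm⟩⟩
  loopless := ⟨fun a h => by
    rcases h with h | ⟨_, h2⟩
    · exact G.ne_of_adj h rfl
    · exact H.ne_of_adj h2 rfl⟩

/-!
For a `c`-set `A`, postcomposing with a bijection `Fin c ≃ A` embeds `K_c^H` into the functions
with image in `A`, so `φ` uses at least `c + 1` colours on them. If `A` and `B` are disjoint,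
every function into `A` is adjacent to every function into `B` (`V` is nonempty because
`χ(K_c^H) > 1`), so these colour sets are disjoint. Any choice of `c + 1` colours from each set
is then a Kneser homomorphism.
-/

open Finset

section ExpGraph

variable {V : Type*} (H : SimpleGraph V)

def expGraphHomOfEmbedding {m n : ℕ} (e : Fin m ↪ Fin n) : expGraph H m →g expGraph H n where
  toFun f := e ∘ f
  map_rel' {_ _} h :=
    ⟨fun hfg => h.1 (funext fun v => e.injective (congrFun hfg v)),
      fun u v huv => e.injective.ne (h.2 u v huv)⟩

variable {H}

lemma nonempty_of_one_lt_chromaticNumber_expGraph {n : ℕ}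
    (h : 1 < (expGraph H n).chromaticNumber) : Nonempty V := by
  by_contra hV
  rw [not_nonempty_iff] at hV
  have : (expGraph H n).Colorable 1 :=
    ⟨Coloring.mk (fun _ => 0) fun hadj _ => hadj.1 (Subsingleton.elim _ _)⟩
  exact h.not_ge (by exact_mod_cast this.chromaticNumber_le)

lemma expGraph_adj_of_forall_ne [Nonempty V] {n : ℕ} {f g : V → Fin n}
    (h : ∀ u v, f u ≠ g v) : (expGraph H n).Adj f g :=
  ⟨fun hfg => h (Classical.arbitrary V) _ (congrFun hfg _), fun u v _ => h u v⟩

variable {n : ℕ} {α : Type*} [Fintype α]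

open Classical in
noncomputable def colorsOn (phi : (expGraph H n).Coloring α) (A : Finset (Fin n)) : Finset α :=
  {col | ∃ f : V → Fin n, (∀ v, f v ∈ A) ∧ phi f = col}

variable (phi : (expGraph H n).Coloring α)

lemma mem_colorsOn {A : Finset (Fin n)} {col : α} :
    col ∈ colorsOn phi A ↔ ∃ f : V → Fin n, (∀ v, f v ∈ A) ∧ phi f = col := by
  simp [colorsOn]

lemma chromaticNumber_expGraph_le_card_colorsOn {A : Finset (Fin n)} {k : ℕ} (hA : #A = k) :
    (expGraph H k).chromaticNumber ≤ #(colorsOn phi A) := by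
  let e := A.orderEmbOfFin hA
  let C : (expGraph H k).Coloring (colorsOn phi A) :=
    Coloring.mk
      (fun f => ⟨phi (e ∘ f), (mem_colorsOn phi).2 ⟨_, fun _ => A.orderEmbOfFin_mem hA _, rfl⟩⟩)
      fun hadj heq => phi.valid ((expGraphHomOfEmbedding H e.toEmbedding).map_adj hadj)
        (congrArg Subtype.val heq)
  simpa using C.colorable.chromaticNumber_le

lemma disjoint_colorsOn [Nonempty V] {A B : Finset (Fin n)} (hAB : Disjoint A B) :
    Disjoint (colorsOn phi A) (colorsOn phi B) := by
  rw [Finset.disjoint_left]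
  intro col hA hB
  obtain ⟨f, hfA, rfl⟩ := (mem_colorsOn phi).1 hA
  obtain ⟨g, hgB, hfg⟩ := (mem_colorsOn phi).1 hB
  have hfg_ne (u v : V) : f u ≠ g v := fun h => Finset.disjoint_left.1 hAB (hfA u) (h ▸ hgB v)
  exact phi.valid (expGraph_adj_of_forall_ne hfg_ne) hfg.symm

end ExpGraph

lemma kneser_adj_of_disjoint {m k : ℕ} (hk : k ≠ 0) {S T : {S : Finset (Fin m) // #S = k}}
    (h : Disjoint S.1 T.1) : (kneser m k).Adj S T := by
  refine ⟨fun hST => hk ?_, h⟩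
  subst hST
  rw [← S.2, (Finset.disjoint_self_iff_empty _).1 h, card_empty]

theorem coloring_expGraph_induces_kneser_hom_general {V : Type*} (H : SimpleGraph V)
    (c d x : ℕ) (hc : 0 < c)
    (hchi : ((c + 1 : ℕ) : ℕ∞) ≤ (expGraph H c).chromaticNumber)
    (phi : (expGraph H (c * d)).Coloring (Fin x)) :
    ∃ psi : kneser (c * d) c →g kneser x (c + 1),
      ∀ (A : {A : Finset (Fin (c * d)) // A.card = c}) (col : Fin x),
        col ∈ (psi A).1 → ∃ f : V → Fin (c * d), (∀ v, f v ∈ A.1) ∧ phi f = col := by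
  have : Nonempty V :=
    nonempty_of_one_lt_chromaticNumber_expGraph (lt_of_lt_of_le (by exact_mod_cast by omega) hchi)
  have hcard (A : {A : Finset (Fin (c * d)) // #A = c}) : c + 1 ≤ #(colorsOn phi A.1) := by
    exact_mod_cast hchi.trans (chromaticNumber_expGraph_le_card_colorsOn phi A.2)
  choose T hTsub hTcard using fun A => exists_subset_card_eq (hcard A)
  refine ⟨⟨fun A => ⟨T A, hTcard A⟩, fun {A B} hAB => ?_⟩, fun A col hcol => ?_⟩
  · exact kneser_adj_of_disjoint c.succ_ne_zero
      ((disjoint_colorsOn phi hAB.2).mono (hTsub A) (hTsub B))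
  · exact (mem_colorsOn phi).1 (hTsub A hcol)

/-- If `χ(K_c^H) ≥ c + 1`, then every proper colouring `φ` of `K_{cd}^H` with `x` colours
induces a graph homomorphism `ψ : K(cd, c) →g K(x, c+1)` such that, for each `c`-subset `A`,
every colour in `ψ(A)` is used by `φ` on some function with image contained in `A`. -/
theorem coloring_expGraph_induces_kneser_hom {V : Type*} [Fintype V] (H : SimpleGraph V)
    (c d x : ℕ) (hc : 0 < c) (hd : 0 < d)
    (hchi : ((c + 1 : ℕ) : ℕ∞) ≤ (expGraph H c).chromaticNumber)
    (phi : (expGraph H (c * d)).Coloring (Fin x)) :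
    ∃ psi : kneser (c * d) c →g kneser x (c + 1),
      ∀ (A : {A : Finset (Fin (c * d)) // A.card = c}) (col : Fin x),
        col ∈ (psi A).1 → ∃ f : V → Fin (c * d), (∀ v, f v ∈ A.1) ∧ phi f = col :=
  coloring_expGraph_induces_kneser_hom_general H c d x hc hchi phi
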